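/- The product update of the input model I with the N-layer message-passing action model MP_N is a subdivision of I in which each edge is subdivided into 3^N edges. In particular, the number of facets of I[MP_N] equals 3^N times the number of facets of I, and the underlying graph of I[MP_N] is connected if I is connected. -/

import Mathlib

inductive Proc : Type where
  | B | W
deriving DecidableEq

/-- Layer symbols: `B` means only B's message was lost, `W` means only W's message was
lost, `bot` means both messages arrived. -/
inductive LSym : Type where
  | B | W | bot
deriving DecidableEq

/-- Projection of an input edge (pair of input values, B-component first) on an agent. -/
def proj {α : Type} : Proc → α × α → α
  | .B, e => e.1
  | .W, e => e.2

def ownSym : Proc → LSym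
  | .B => .B
  | .W => .W

def otherSym : Proc → LSym
  | .B => .W
  | .W => .B

/-- Views in the layered message-passing model: an input value, the empty view □,
or a pair of views. -/
inductive View (α : Type) : Type where
  | inp : α → View α
  | box : View α
  | pair : View α → View α → View α
deriving DecidableEq

/-- The view of a process after an execution (a list of layer symbols, most recent layer
first) starting from the input edge `e = (i,j)`:
`view a [] (i,j)` is the agent's own input; for a layer `x`,
if `x = B` then `view B = (V_B,V_W)` and `view W = (□,V_W)`;
if `x = W` then `view B = (V_B,□)` and `view W = (V_B,V_W)`;
if `x = ⊥` then both views are `(V_B,V_W)`. -/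
def view {α : Type} : Proc → List LSym → α × α → View α
  | a, [], e => .inp (proj a e)
  | .B, .W :: l, e => .pair (view .B l e) .box
  | .B, .B :: l, e => .pair (view .B l e) (view .W l e)
  | .B, .bot :: l, e => .pair (view .B l e) (view .W l e)
  | .W, .B :: l, e => .pair .box (view .W l e)
  | .W, .W :: l, e => .pair (view .B l e) (view .W l e)
  | .W, .bot :: l, e => .pair (view .B l e) (view .W l e)

/-- The indistinguishability relation `∼ₐ` of the layered message-passing action model,
on pairs (execution, input edge), executions written with the most recent layer first:
for empty executions, indistinguishability means equal own inputs; `(α·p, X) ∼ₐ (β·q, Y)`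
iff either `p = q` is the other agent's symbol (the message to `a` was lost) and
`(α,X) ∼ₐ (β,Y)`, or `p, q ∈ {⊥, own a}` and `α = β` and `X = Y`. -/
inductive Indist {α : Type} (a : Proc) :
    List LSym × (α × α) → List LSym × (α × α) → Prop where
  | nil : ∀ e f : α × α, proj a e = proj a f → Indist a ([], e) ([], f)
  | lost : ∀ (l m : List LSym) (e f : α × α), Indist a (l, e) (m, f) →
      Indist a (otherSym a :: l, e) (otherSym a :: m, f)
  | recv : ∀ (p q : LSym) (l : List LSym) (e : α × α),
      (p = LSym.bot ∨ p = ownSym a) → (q = LSym.bot ∨ q = ownSym a) →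
      Indist a (p :: l, e) (q :: l, e)

/-- Facets of the product update model I[MP_N] over a 1-dimensional chromatic input model
(a bipartite graph with edges e ∈ E, recorded as pairs (B-vertex, W-vertex)): pairs of an
execution of length N and an input edge (the action (α, X) whose precondition holds
exactly at X). -/
def PFacet (N : ℕ) {V : Type} (E : Set (V × V)) : Type :=
  {p : List LSym × (V × V) // p.1.length = N ∧ p.2 ∈ E}

/-- Two facets of I[MP_N] share their a-colored vertex iff their actions are
a-indistinguishable (which entails equal a-inputs). -/
def vrelE (N : ℕ) {V : Type} (E : Set (V × V)) (a : Proc) (p q : PFacet N E) : Prop :=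
  Indist a p.val q.val

/-- Vertices of the product update model I[MP_N]: an agent together with an equivalence
class of facets under that agent's indistinguishability relation. -/
def PVtxE (N : ℕ) {V : Type} (E : Set (V × V)) : Type :=
  Σ a : Proc, Quot (vrelE N E a)

/-- The facet of I[MP_N] corresponding to an action (execution, input edge), given by its
two vertices. -/
def facetOfE {N : ℕ} {V : Type} {E : Set (V × V)} (p : PFacet N E) : Set (PVtxE N E) :=
  {⟨Proc.B, Quot.mk _ p⟩, ⟨Proc.W, Quot.mk _ p⟩}

/-!
Over a fixed input edge, the facets of `I[MP_N]` are the executions of length `N`, i.e. words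
over `{B, W, ⊥}`. Listed in the order of a reflected ternary Gray code, two of them share their
`a`-vertex exactly when their indices are consecutive and the smaller one is even (`a = B`) or
odd (`a = W`): prepending a layer either repeats the symbol by which `a` loses its message,
which keeps the tails `a`-indistinguishable, or uses a symbol in which `a` receives, which makes
the two facets differ only in that layer. Two facets over input edges sharing an `a`-vertex are
joined by the execution in which every message to `a` is lost, so connectivity of `I` lifts to
`I[MP_N]`. Finally, facets are pairs (execution, edge), and distinct pairs have distinct vertex
sets since `B` and `W` together tell apart any two actions.
-/

def LSym.digit : LSym → ℕ
  | .B => 0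
  | .bot => 1
  | .W => 2

-- Reflected when the index `g` of the tail is odd, so that consecutive indices differ in one layer.
def grayDigit (g : ℕ) (x : LSym) : ℕ :=
  if g % 2 = 0 then x.digit else 2 - x.digit

def grayIndex : List LSym → ℕ
  | [] => 0
  | x :: l => 3 * grayIndex l + grayDigit (grayIndex l) x

lemma grayDigit_le_two (g : ℕ) (x : LSym) : grayDigit g x ≤ 2 := by
  cases x <;> simp only [grayDigit, LSym.digit] <;> split <;> omega

lemma grayIndex_lt_pow (l : List LSym) : grayIndex l < 3 ^ l.length := by
  induction l with
  | nil => simp [grayIndex]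
  | cons x l ih =>
    have := grayDigit_le_two (grayIndex l) x
    rw [grayIndex, List.length_cons, pow_succ]
    omega

lemma three_mul_add_grayDigit_inj {g h : ℕ} {x y : LSym} :
    3 * g + grayDigit g x = 3 * h + grayDigit h y ↔ g = h ∧ x = y := by
  constructor
  · intro hxy
    have hx := grayDigit_le_two g x
    have hy := grayDigit_le_two h y
    obtain rfl : g = h := by omega
    refine ⟨rfl, ?_⟩
    cases x <;> cases y <;> first
      | rfl
      | (simp only [grayDigit, LSym.digit] at hxy; split at hxy <;> omega)
  · rintro ⟨rfl, rfl⟩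
    rfl

lemma grayIndex_inj {l m : List LSym} (h : l.length = m.length) :
    grayIndex l = grayIndex m ↔ l = m := by
  induction l generalizing m with
  | nil => cases m with
    | nil => simp
    | cons => simp at h
  | cons x l ih => cases m with
    | nil => simp at h
    | cons y m =>
      rw [List.length_cons, List.length_cons, add_left_inj] at h
      rw [grayIndex, grayIndex, three_mul_add_grayDigit_inj, ih h, List.cons.injEq, and_comm]

def Proc.parity : Proc → ℕ
  | .B => 0
  | .W => 1

def GrayAdj (a : Proc) (n m : ℕ) : Prop :=
  n + 1 = m ∧ n % 2 = a.parity ∨ m + 1 = n ∧ m % 2 = a.parity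

lemma exists_grayAdj_iff {n m : ℕ} : (∃ a, GrayAdj a n m) ↔ n + 1 = m ∨ m + 1 = n := by
  constructor
  · rintro ⟨a, h | h⟩
    exacts [Or.inl h.1, Or.inr h.1]
  · intro h
    rcases Nat.mod_two_eq_zero_or_one (min n m) with hp | hp
    · exact ⟨.B, by simp only [GrayAdj, Proc.parity]; omega⟩
    · exact ⟨.W, by simp only [GrayAdj, Proc.parity]; omega⟩

lemma grayAdj_three_mul_add_grayDigit_iff (a : Proc) (g h : ℕ) (x y : LSym) :
    GrayAdj a (3 * g + grayDigit g x) (3 * h + grayDigit h y) ↔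
      (x = otherSym a ∧ y = otherSym a ∧ GrayAdj a g h) ∨
        (x ≠ otherSym a ∧ y ≠ otherSym a ∧ x ≠ y ∧ g = h) := by
  rcases Nat.mod_two_eq_zero_or_one g with hg | hg <;>
  rcases Nat.mod_two_eq_zero_or_one h with hh | hh <;>
  cases a <;> cases x <;> cases y <;>
  simp [GrayAdj, grayDigit, LSym.digit, Proc.parity, otherSym, hg, hh] <;> omega

lemma ne_otherSym_iff {a : Proc} {x : LSym} :
    x ≠ otherSym a ↔ x = LSym.bot ∨ x = ownSym a := by
  cases a <;> cases x <;> simp [otherSym, ownSym]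

namespace Indist

variable {α : Type} {a : Proc}

lemma cons_iff {x y : LSym} {l m : List LSym} {e f : α × α} :
    Indist a (x :: l, e) (y :: m, f) ↔
      (x = otherSym a ∧ y = otherSym a ∧ Indist a (l, e) (m, f)) ∨
        (x ≠ otherSym a ∧ y ≠ otherSym a ∧ l = m ∧ e = f) := by
  simp only [ne_otherSym_iff]
  constructor
  · rintro (_ | ⟨_, _, _, _, h⟩ | ⟨_, _, _, _, hx, hy⟩)
    · exact .inl ⟨rfl, rfl, h⟩
    · exact .inr ⟨hx, hy, rfl, rfl⟩
  · rintro (⟨rfl, rfl, h⟩ | ⟨hx, hy, rfl, rfl⟩)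
    exacts [.lost l m e f h, .recv x y l e hx hy]

lemma refl (p : List LSym × (α × α)) : Indist a p p := by
  obtain ⟨l, e⟩ := p
  induction l with
  | nil => exact .nil e e rfl
  | cons x l ih =>
    by_cases hx : x = otherSym a
    · exact cons_iff.2 (.inl ⟨hx, hx, ih⟩)
    · exact cons_iff.2 (.inr ⟨hx, hx, rfl, rfl⟩)

lemma symm {p q : List LSym × (α × α)} (h : Indist a p q) : Indist a q p := by
  induction h with
  | nil e f h => exact .nil f e h.symm
  | lost l m e f _ ih => exact .lost m l f e ih
  | recv x y l e hx hy => exact .recv y x l e hy hx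

lemma trans {p q r : List LSym × (α × α)} (hpq : Indist a p q) (hqr : Indist a q r) :
    Indist a p r := by
  induction hpq generalizing r with
  | nil e f h =>
    cases hqr with
    | nil _ g h' => exact .nil e g (h.trans h')
  | lost l m e f _ ih =>
    cases hqr with
    | lost _ k _ g h' => exact .lost l k e g (ih h')
    | recv _ _ _ _ hx _ => cases a <;> simp [otherSym, ownSym] at hx
  | recv x y l e hx hy =>
    cases hqr with
    | lost => cases a <;> simp [otherSym, ownSym] at hy
    | recv _ z _ _ _ hz => exact .recv x z l e hx hz

lemma equivalence : Equivalence (Indist (α := α) a) := ⟨refl, symm, trans⟩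

end Indist

lemma eq_of_indist_B_of_indist_W {α : Type} {p q : List LSym × (α × α)}
    (hB : Indist Proc.B p q) (hW : Indist Proc.W p q) : p = q := by
  cases hB with
  | nil e f h =>
    cases hW with
    | nil _ _ h' => rw [Prod.ext h h']
  | lost => cases hW; rfl
  | recv x y l e hx hy =>
    cases hW with
    | lost => rfl
    | recv _ _ _ _ hx' hy' =>
      simp only [ownSym] at hx hy hx' hy'
      obtain rfl : x = y := by grind
      rfl

theorem indist_same_edge_iff {α : Type} (a : Proc) (e : α × α) {l m : List LSym}
    (h : l.length = m.length) :
    Indist a (l, e) (m, e) ↔ l = m ∨ GrayAdj a (grayIndex l) (grayIndex m) := by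
  induction l generalizing m with
  | nil => cases m with
    | nil => exact iff_of_true (.nil e e rfl) (.inl rfl)
    | cons => simp at h
  | cons x l ih => cases m with
    | nil => simp at h
    | cons y m =>
      rw [List.length_cons, List.length_cons, add_left_inj] at h
      rw [Indist.cons_iff, ih h, grayIndex, grayIndex, grayAdj_three_mul_add_grayDigit_iff,
        grayIndex_inj h, List.cons.injEq]
      grind

lemma indist_replicate_otherSym {α : Type} {a : Proc} (n : ℕ) {e f : α × α}
    (h : proj a e = proj a f) :
    Indist a (List.replicate n (otherSym a), e) (List.replicate n (otherSym a), f) := by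
  induction n with
  | zero => exact .nil e f h
  | succ n ih => exact .lost _ _ e f ih

instance : Fintype LSym := ⟨{.B, .W, .bot}, fun x => by cases x <;> simp⟩

noncomputable def grayEquiv (N : ℕ) : List.Vector LSym N ≃ Fin (3 ^ N) :=
  Equiv.ofBijective
    (fun v => ⟨grayIndex v.1, (grayIndex_lt_pow v.1).trans_eq (congrArg _ v.2)⟩) <|
    (Fintype.bijective_iff_injective_and_card _).2
      ⟨fun v w h => Subtype.ext ((grayIndex_inj (v.2.trans w.2.symm)).1 (congrArg Fin.val h)),
        by simp [card_vector]; rfl⟩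

section ProductUpdate

variable {N : ℕ} {V : Type} {E : Set (V × V)}

lemma quot_mk_vrelE_eq_iff {a : Proc} {p q : PFacet N E} :
    Quot.mk (vrelE N E a) p = Quot.mk (vrelE N E a) q ↔ Indist a p.val q.val :=
  Quot.eq.trans ((Indist.equivalence.comap Subtype.val).eqvGen_iff)

lemma mem_facetOfE_iff {a : Proc} {p q : PFacet N E} :
    (⟨a, Quot.mk _ p⟩ : PVtxE N E) ∈ facetOfE q ↔
      Quot.mk (vrelE N E a) p = Quot.mk _ q := by
  change (_ : Σ b, Quot (vrelE N E b)) = _ ∨ (_ : Σ b, Quot (vrelE N E b)) = _ ↔ _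
  cases a <;> simp

lemma facetOfE_injective : Function.Injective (facetOfE (N := N) (E := E)) := by
  intro p q h
  have hB : Quot.mk (vrelE N E .B) p = Quot.mk _ q :=
    mem_facetOfE_iff.1 (h ▸ mem_facetOfE_iff.2 rfl)
  have hW : Quot.mk (vrelE N E .W) p = Quot.mk _ q :=
    mem_facetOfE_iff.1 (h ▸ mem_facetOfE_iff.2 rfl)
  exact Subtype.ext <|
    eq_of_indist_B_of_indist_W (quot_mk_vrelE_eq_iff.1 hB) (quot_mk_vrelE_eq_iff.1 hW)

def pfacetEquivProd (N : ℕ) (E : Set (V × V)) : PFacet N E ≃ List.Vector LSym N × E where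
  toFun p := (⟨p.val.1, p.prop.1⟩, ⟨p.val.2, p.prop.2⟩)
  invFun x := ⟨(x.1.val, x.2.val), x.1.prop, x.2.prop⟩

theorem ncard_facets :
    {X : Set (PVtxE N E) | ∃ p : PFacet N E, X = facetOfE p}.ncard = 3 ^ N * E.ncard := by
  have hrange : {X : Set (PVtxE N E) | ∃ p : PFacet N E, X = facetOfE p} = Set.range facetOfE :=
    Set.ext fun X => exists_congr fun p => eq_comm
  rw [hrange, Set.ncard_range_of_injective facetOfE_injective,
    Nat.card_congr (pfacetEquivProd N E), Nat.card_prod, Nat.card_congr (grayEquiv N),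
    Nat.card_eq_fintype_card, Fintype.card_fin,
    Nat.card_coe_set_eq]

def fiberEquiv (e : V × V) (he : e ∈ E) :
    {p : PFacet N E // p.val.2 = e} ≃ List.Vector LSym N where
  toFun p := ⟨p.1.val.1, p.1.prop.1⟩
  invFun v := ⟨⟨(v.1, e), v.2, he⟩, rfl⟩
  left_inv := by rintro ⟨⟨⟨l, _⟩, _, _⟩, rfl⟩; rfl

noncomputable def fiberOrder (e : V × V) (he : e ∈ E) :
    {p : PFacet N E // p.val.2 = e} ≃ Fin (3 ^ N) :=
  (fiberEquiv e he).trans (grayEquiv N)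

lemma fiberOrder_val {e : V × V} {he : e ∈ E} (p : {p : PFacet N E // p.val.2 = e}) :
    (fiberOrder e he p).val = grayIndex p.1.val.1 := rfl

def SharesVertex (p q : PFacet N E) : Prop :=
  ∃ a, Quot.mk (vrelE N E a) p = Quot.mk (vrelE N E a) q

theorem sharesVertex_fiber_iff {e : V × V} (he : e ∈ E)
    (p q : {p : PFacet N E // p.val.2 = e}) :
    SharesVertex p.1 q.1 ↔
      (fiberOrder e he p).val + 1 = (fiberOrder e he q).val ∨
        (fiberOrder e he q).val + 1 = (fiberOrder e he p).val ∨ p = q := by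
  have hpq : p = q ↔ p.1.val.1 = q.1.val.1 :=
    (fiberEquiv e he).injective.eq_iff.symm.trans Subtype.ext_iff
  have hsame : ∀ a, Indist a p.1.val q.1.val ↔
      p.1.val.1 = q.1.val.1 ∨ GrayAdj a (grayIndex p.1.val.1) (grayIndex q.1.val.1) := by
    intro a
    rw [← indist_same_edge_iff a e (p.1.prop.1.trans q.1.prop.1.symm),
      show p.1.val = (p.1.val.1, e) from Prod.ext rfl p.2,
      show q.1.val = (q.1.val.1, e) from Prod.ext rfl q.2]
  simp only [SharesVertex, quot_mk_vrelE_eq_iff, hsame, fiberOrder_val, hpq]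
  rw [← or_assoc, ← exists_grayAdj_iff]
  exact ⟨fun ⟨a, h⟩ => h.elim .inr fun h => .inl ⟨a, h⟩,
    fun h => h.elim (fun ⟨a, h⟩ => ⟨a, .inr h⟩) fun h => ⟨.B, .inl h⟩⟩

def facetGraph (N : ℕ) (E : Set (V × V)) : SimpleGraph (PFacet N E) where
  Adj p q := p ≠ q ∧ SharesVertex p q
  symm := ⟨fun _ _ h => ⟨h.1.symm, h.2.imp fun _ => Eq.symm⟩⟩
  loopless := ⟨fun _ h => h.1 rfl⟩

noncomputable def fiberPath (e : V × V) (he : e ∈ E) :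
    SimpleGraph.pathGraph (3 ^ N) →g facetGraph N E where
  toFun i := ((fiberOrder e he).symm i).1
  map_rel' {i j} hij := by
    refine ⟨fun h => hij.ne ((fiberOrder e he).symm.injective (Subtype.ext h)),
      (sharesVertex_fiber_iff he _ _).2 ?_⟩
    rw [Equiv.apply_symm_apply, Equiv.apply_symm_apply, ← or_assoc]
    exact .inl (SimpleGraph.pathGraph_adj.1 hij)

lemma fiberPath_fiberOrder {e : V × V} {he : e ∈ E} (p : {p : PFacet N E // p.val.2 = e}) :
    fiberPath e he (fiberOrder e he p) = p.1 :=
  congrArg Subtype.val ((fiberOrder e he).symm_apply_apply p)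

theorem reflTransGen_sharesVertex_of_edge_eq {p q : PFacet N E} (h : p.val.2 = q.val.2) :
    Relation.ReflTransGen SharesVertex p q := by
  let ord := fiberOrder (N := N) q.val.2 q.prop.2
  have hreach := (SimpleGraph.pathGraph_preconnected _ (ord ⟨p, h⟩) (ord ⟨q, rfl⟩)).map
    (fiberPath q.val.2 q.prop.2)
  rw [fiberPath_fiberOrder, fiberPath_fiberOrder, SimpleGraph.reachable_iff_reflTransGen] at hreach
  exact Relation.ReflTransGen.mono (fun _ _ h => h.2) _ _ hreach

def InputAdj (E : Set (V × V)) (x y : V × V) : Prop :=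
  x ∈ E ∧ y ∈ E ∧ (x.1 = y.1 ∨ x.2 = y.2)

theorem reflTransGen_sharesVertex_of_inputAdj {e f : V × V}
    (hef : Relation.ReflTransGen (InputAdj E) e f) (p q : PFacet N E)
    (hp : p.val.2 = e) (hq : q.val.2 = f) : Relation.ReflTransGen SharesVertex p q := by
  induction hef generalizing q with
  | refl => exact reflTransGen_sharesVertex_of_edge_eq (hp.trans hq.symm)
  | tail _ hbc ih =>
    obtain ⟨hb, hc, hshare⟩ := hbc
    obtain ⟨a, ha⟩ : ∃ a, proj a _ = proj a _ := hshare.elim (⟨.B, ·⟩) (⟨.W, ·⟩)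
    let r : PFacet N E := ⟨(List.replicate N (otherSym a), _), by simp, hb⟩
    let s : PFacet N E := ⟨(List.replicate N (otherSym a), _), by simp, hc⟩
    have hrs : SharesVertex r s := ⟨a, quot_mk_vrelE_eq_iff.2 (indist_replicate_otherSym N ha)⟩
    exact ((ih r rfl).tail hrs).trans (reflTransGen_sharesVertex_of_edge_eq hq.symm)

end ProductUpdate

theorem product_update_is_subdivision_general {V : Type} (N : ℕ) (E : Set (V × V)) :
    ({X : Set (PVtxE N E) | ∃ p : PFacet N E, X = facetOfE p}.ncard = 3 ^ N * E.ncard)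
    ∧
    (∀ e ∈ E, ∃ ord : {p : PFacet N E // p.val.2 = e} ≃ Fin (3 ^ N),
      ∀ p q : {p : PFacet N E // p.val.2 = e},
        ((∃ a, Quot.mk (vrelE N E a) p.val = Quot.mk (vrelE N E a) q.val) ↔
          ((ord p).val + 1 = (ord q).val ∨ (ord q).val + 1 = (ord p).val ∨ p = q)))
    ∧
    ((∀ e ∈ E, ∀ f ∈ E,
        Relation.ReflTransGen (fun x y => x ∈ E ∧ y ∈ E ∧ (x.1 = y.1 ∨ x.2 = y.2)) e f) →
      ∀ p q : PFacet N E,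
        Relation.ReflTransGen
          (fun p q => ∃ a, Quot.mk (vrelE N E a) p = Quot.mk (vrelE N E a) q) p q) :=
  ⟨ncard_facets, fun _ he => ⟨fiberOrder _ he, sharesVertex_fiber_iff he⟩,
    fun hconn p q => reflTransGen_sharesVertex_of_inputAdj
      (hconn _ p.prop.2 _ q.prop.2) p q rfl rfl⟩

/-- the product update of a 1-dimensional (bipartite, colors B and W) input
model I with the N-layer message-passing action model MP_N is a subdivision of I in which
each edge is subdivided into 3^N edges.  Concretely: (1) the number of facets of I[MP_N]
is 3^N times the number of facets (edges) of I; (2) for each input edge e, the facets of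
I[MP_N] lying over e form a path with 3^N edges: they can be enumerated by Fin (3^N) so
that two of them share a vertex iff they are equal or consecutive; (3) if I is connected
(any two edges joined by a chain of edges sharing endpoints) then the underlying graph of
I[MP_N] is connected (any two facets joined by a chain of facets sharing a vertex). -/
theorem product_update_is_subdivision {V : Type} (N : ℕ) (chiI : V → Proc)
    (E : Set (V × V)) (hchrom : ∀ e ∈ E, chiI e.1 = Proc.B ∧ chiI e.2 = Proc.W)
    (hfin : E.Finite) :
    ({X : Set (PVtxE N E) | ∃ p : PFacet N E, X = facetOfE p}.ncard = 3 ^ N * E.ncard)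
    ∧
    (∀ e ∈ E, ∃ ord : {p : PFacet N E // p.val.2 = e} ≃ Fin (3 ^ N),
      ∀ p q : {p : PFacet N E // p.val.2 = e},
        ((∃ a, Quot.mk (vrelE N E a) p.val = Quot.mk (vrelE N E a) q.val) ↔
          ((ord p).val + 1 = (ord q).val ∨ (ord q).val + 1 = (ord p).val ∨ p = q)))
    ∧
    ((∀ e ∈ E, ∀ f ∈ E,
        Relation.ReflTransGen (fun x y => x ∈ E ∧ y ∈ E ∧ (x.1 = y.1 ∨ x.2 = y.2)) e f) →
      ∀ p q : PFacet N E,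
        Relation.ReflTransGen
          (fun p q => ∃ a, Quot.mk (vrelE N E a) p = Quot.mk (vrelE N E a) q) p q) :=
  product_update_is_subdivision_general N E
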